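/- Switching a binding to the tail environment restricts the final store: if M, s ⇓_{(ρT | (x,l)·ρ), F} v, s' in the optimised semantics and x ∉ dom(ρT), then M, s ⇓_{(ρT·(x,l) | ρ), F} v, s'|_{dom(s')\{l}}, and both derivations have the same height. -/

import Mathlib

namespace CPC

abbrev Loc := Nat
abbrev Var := String

inductive Val : Type
  | unit | tt | ff
  | nat (n : Nat)
deriving DecidableEq

inductive Tm : Type
  | val (v : Val)
  | var (x : Var)
  | assign (x : Var) (t : Tm)
  | ite (c t e : Tm)
  | seq (a b : Tm)
  | letrec (f : Var) (ps : List Var) (body rest : Tm)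
  | call (f : Var) (args : List Tm)

abbrev Env := Var → Option Loc
abbrev Store := Loc → Option Val

def emptyEnv : Env := fun _ => none
def emptyStore : Store := fun _ => none

/-- Modification (extension) of a partial function. -/
def updFn {α β : Type} [DecidableEq α] (f : α → Option β) (x : α) (y : β) :
    α → Option β :=
  fun t => if t = x then some y else f t

/-- Concatenation of environments: leftmost binding wins. -/
def envCat (ρ₁ ρ₂ : Env) : Env := fun x => (ρ₁ x).orElse (fun _ => ρ₂ x)

def single (x : Var) (l : Loc) : Env := updFn emptyEnv x l

def envIm (ρ : Env) : Set Loc := {l | ∃ x, ρ x = some l}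
def envDom (ρ : Env) : Set Var := {x | ρ x ≠ none}
def storeDom (s : Store) : Set Loc := {l | s l ≠ none}

open Classical in
/-- Cleaning of a store with respect to an environment. -/
noncomputable def clean (ρ : Env) (s : Store) : Store :=
  fun l => if l ∈ envIm ρ then none else s l

open Classical in
/-- Restriction of a store to a set of locations. -/
noncomputable def resStore (s : Store) (D : Set Loc) : Store :=
  fun l => if l ∈ D then s l else none

/-- Store extension: `t` agrees with `s` on `dom s`. -/
def StoreLe (s t : Store) : Prop := ∀ l ∈ storeDom s, t l = s l

/-- Environment binding a list of variables to a list of locations. -/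
def envOf (xs : List Var) (ls : List Loc) : Env := fun y => (xs.zip ls).lookup y

/-- Store updated with a list of locations bound to a list of values. -/
def updStore (s : Store) (ls : List Loc) (vs : List Val) : Store :=
  fun l => ((ls.zip vs).lookup l).orElse (fun _ => s l)

/-- Closures: parameters, body, captured variable environment,
    captured function environment. -/
inductive Clos : Type
  | mk (ps : List Var) (body : Tm) (ρ : Env) (F : List (Var × Clos))

abbrev FEnv := List (Var × Clos)

def lookupF (F : FEnv) (f : Var) : Option Clos := F.lookup f

/-- `LocIn l F`: the location `l` appears in `F`
    (in some environment captured, recursively, in a closure of `F`). -/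
inductive LocIn : Loc → FEnv → Prop
  | env {l : Loc} {F : FEnv} {f ps body ρ F'} :
      (f, Clos.mk ps body ρ F') ∈ F → l ∈ envIm ρ → LocIn l F
  | deep {l : Loc} {F : FEnv} {f ps body ρ F'} :
      (f, Clos.mk ps body ρ F') ∈ F → LocIn l F' → LocIn l F

/-! ### Naive big-step reduction rules (with derivation height) -/

mutual
inductive EvalN : Nat → Env → FEnv → Tm → Store → Val → Store → Prop
  | val {ρ : Env} {F : FEnv} {v s} : EvalN 1 ρ F (.val v) s v s
  | var {ρ : Env} {F : FEnv} {x l s w} :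
      ρ x = some l → s l = some w → EvalN 1 ρ F (.var x) s w s
  | assign {n} {ρ : Env} {F : FEnv} {a s v s' x l} :
      EvalN n ρ F a s v s' → ρ x = some l → l ∈ storeDom s' →
      EvalN (n+1) ρ F (.assign x a) s .unit (updFn s' l v)
  | seq {n m} {ρ : Env} {F : FEnv} {a b s v s' v' s''} :
      EvalN n ρ F a s v s' → EvalN m ρ F b s' v' s'' →
      EvalN (n+m+1) ρ F (.seq a b) s v' s''
  | ifT {n m} {ρ : Env} {F : FEnv} {c b e s s' v s''} :
      EvalN n ρ F c s .tt s' → EvalN m ρ F b s' v s'' →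
      EvalN (n+m+1) ρ F (.ite c b e) s v s''
  | ifF {n m} {ρ : Env} {F : FEnv} {c b e s s' v s''} :
      EvalN n ρ F c s .ff s' → EvalN m ρ F e s' v s'' →
      EvalN (n+m+1) ρ F (.ite c b e) s v s''
  | letrec {n} {ρ : Env} {F : FEnv} {f ps a b s v s'} :
      EvalN n ρ ((f, Clos.mk ps a ρ F) :: F) b s v s' →
      EvalN (n+1) ρ F (.letrec f ps a b) s v s'
  | call {n m} {ρ : Env} {F : FEnv} {f args s₁ vs s₂ xs b} {ρ' : Env} {F' : FEnv}
      {ls : List Loc} {v s'} :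
      lookupF F f = some (Clos.mk xs b ρ' F') →
      EvalNArgs n ρ F args s₁ vs s₂ →
      ls.length = xs.length → vs.length = xs.length → ls.Nodup →
      (∀ l ∈ ls, l ∉ storeDom s₂ ∧ ¬ LocIn l ((f, Clos.mk xs b ρ' F') :: F')) →
      EvalN m (envCat (envOf xs ls) ρ') ((f, Clos.mk xs b ρ' F') :: F')
        b (updStore s₂ ls vs) v s' →
      EvalN (n+m+1) ρ F (.call f args) s₁ v s'

inductive EvalNArgs : Nat → Env → FEnv → List Tm → Store → List Val → Store → Prop
  | nil {ρ : Env} {F : FEnv} {s} : EvalNArgs 0 ρ F [] s [] s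
  | cons {n m} {ρ : Env} {F : FEnv} {a as s v s' vs s''} :
      EvalN n ρ F a s v s' → EvalNArgs m ρ F as s' vs s'' →
      EvalNArgs (n+m) ρ F (a :: as) s (v :: vs) s''
end

/-! ### Intermediate big-step reduction rules (split environments,
      minimal stores, non-compact closures) -/

mutual
inductive EvalI : Nat → Env → Env → FEnv → Tm → Store → Val → Store → Prop
  | val {ρT ρ : Env} {F : FEnv} {v s} :
      EvalI 1 ρT ρ F (.val v) s v (clean ρT s)
  | var {ρT ρ : Env} {F : FEnv} {x l s w} :
      envCat ρT ρ x = some l → s l = some w →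
      EvalI 1 ρT ρ F (.var x) s w (clean ρT s)
  | assign {n} {ρT ρ : Env} {F : FEnv} {a s v s' x l} :
      EvalI n emptyEnv (envCat ρT ρ) F a s v s' →
      envCat ρT ρ x = some l → l ∈ storeDom s' →
      EvalI (n+1) ρT ρ F (.assign x a) s .unit (clean ρT (updFn s' l v))
  | seq {n m} {ρT ρ : Env} {F : FEnv} {a b s v s' v' s''} :
      EvalI n emptyEnv (envCat ρT ρ) F a s v s' → EvalI m ρT ρ F b s' v' s'' →
      EvalI (n+m+1) ρT ρ F (.seq a b) s v' s''
  | ifT {n m} {ρT ρ : Env} {F : FEnv} {c b e s s' v s''} :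
      EvalI n emptyEnv (envCat ρT ρ) F c s .tt s' → EvalI m ρT ρ F b s' v s'' →
      EvalI (n+m+1) ρT ρ F (.ite c b e) s v s''
  | ifF {n m} {ρT ρ : Env} {F : FEnv} {c b e s s' v s''} :
      EvalI n emptyEnv (envCat ρT ρ) F c s .ff s' → EvalI m ρT ρ F e s' v s'' →
      EvalI (n+m+1) ρT ρ F (.ite c b e) s v s''
  | letrec {n} {ρT ρ : Env} {F : FEnv} {f ps a b s v s'} :
      EvalI n ρT ρ ((f, Clos.mk ps a (envCat ρT ρ) F) :: F) b s v s' →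
      EvalI (n+1) ρT ρ F (.letrec f ps a b) s v s'
  | call {n m} {ρT ρ : Env} {F : FEnv} {f args s₁ vs s₂ xs b} {ρ' : Env} {F' : FEnv}
      {ls : List Loc} {v s'} :
      lookupF F f = some (Clos.mk xs b ρ' F') →
      EvalIArgs n (envCat ρT ρ) F args s₁ vs s₂ →
      ls.length = xs.length → vs.length = xs.length → ls.Nodup →
      (∀ l ∈ ls, l ∉ storeDom s₂ ∧ ¬ LocIn l ((f, Clos.mk xs b ρ' F') :: F')) →
      EvalI m (envOf xs ls) ρ' ((f, Clos.mk xs b ρ' F') :: F')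
        b (updStore s₂ ls vs) v s' →
      EvalI (n+m+1) ρT ρ F (.call f args) s₁ v (clean ρT s')

inductive EvalIArgs : Nat → Env → FEnv → List Tm → Store → List Val → Store → Prop
  | nil {ρ : Env} {F : FEnv} {s} : EvalIArgs 0 ρ F [] s [] s
  | cons {n m} {ρ : Env} {F : FEnv} {a as s v s' vs s''} :
      EvalI n emptyEnv ρ F a s v s' → EvalIArgs m ρ F as s' vs s'' →
      EvalIArgs (n+m) ρ F (a :: as) s (v :: vs) s''
end

/-- Restriction of an environment outside a list of variables. -/
def restrictEnv (ρ : Env) (ps : List Var) : Env :=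
  fun x => if x ∈ ps then none else ρ x

/-! ### Optimised big-step reduction rules (minimal stores and compact
      closures): identical to the intermediate rules except that the
      (letrec) rule builds compact closures -/

mutual
inductive EvalO : Nat → Env → Env → FEnv → Tm → Store → Val → Store → Prop
  | val {ρT ρ : Env} {F : FEnv} {v s} :
      EvalO 1 ρT ρ F (.val v) s v (clean ρT s)
  | var {ρT ρ : Env} {F : FEnv} {x l s w} :
      envCat ρT ρ x = some l → s l = some w →
      EvalO 1 ρT ρ F (.var x) s w (clean ρT s)
  | assign {n} {ρT ρ : Env} {F : FEnv} {a s v s' x l} :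
      EvalO n emptyEnv (envCat ρT ρ) F a s v s' →
      envCat ρT ρ x = some l → l ∈ storeDom s' →
      EvalO (n+1) ρT ρ F (.assign x a) s .unit (clean ρT (updFn s' l v))
  | seq {n m} {ρT ρ : Env} {F : FEnv} {a b s v s' v' s''} :
      EvalO n emptyEnv (envCat ρT ρ) F a s v s' → EvalO m ρT ρ F b s' v' s'' →
      EvalO (n+m+1) ρT ρ F (.seq a b) s v' s''
  | ifT {n m} {ρT ρ : Env} {F : FEnv} {c b e s s' v s''} :
      EvalO n emptyEnv (envCat ρT ρ) F c s .tt s' → EvalO m ρT ρ F b s' v s'' →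
      EvalO (n+m+1) ρT ρ F (.ite c b e) s v s''
  | ifF {n m} {ρT ρ : Env} {F : FEnv} {c b e s s' v s''} :
      EvalO n emptyEnv (envCat ρT ρ) F c s .ff s' → EvalO m ρT ρ F e s' v s'' →
      EvalO (n+m+1) ρT ρ F (.ite c b e) s v s''
  | letrec {n} {ρT ρ : Env} {F : FEnv} {f ps a b s v s'} :
      EvalO n ρT ρ ((f, Clos.mk ps a (restrictEnv (envCat ρT ρ) ps) F) :: F) b s v s' →
      EvalO (n+1) ρT ρ F (.letrec f ps a b) s v s'
  | call {n m} {ρT ρ : Env} {F : FEnv} {f args s₁ vs s₂ xs b} {ρ' : Env} {F' : FEnv}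
      {ls : List Loc} {v s'} :
      lookupF F f = some (Clos.mk xs b ρ' F') →
      EvalOArgs n (envCat ρT ρ) F args s₁ vs s₂ →
      ls.length = xs.length → vs.length = xs.length → ls.Nodup →
      (∀ l ∈ ls, l ∉ storeDom s₂ ∧ ¬ LocIn l ((f, Clos.mk xs b ρ' F') :: F')) →
      EvalO m (envOf xs ls) ρ' ((f, Clos.mk xs b ρ' F') :: F')
        b (updStore s₂ ls vs) v s' →
      EvalO (n+m+1) ρT ρ F (.call f args) s₁ v (clean ρT s')

inductive EvalOArgs : Nat → Env → FEnv → List Tm → Store → List Val → Store → Prop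
  | nil {ρ : Env} {F : FEnv} {s} : EvalOArgs 0 ρ F [] s [] s
  | cons {n m} {ρ : Env} {F : FEnv} {a as s v s' vs s''} :
      EvalO n emptyEnv ρ F a s v s' → EvalOArgs m ρ F as s' vs s'' →
      EvalOArgs (n+m) ρ F (a :: as) s (v :: vs) s''
end

/-! Every rule except the tail rules (val, var, assign, call) consults only the total
environment `ρT·ρ`, which does not change when `(x,l)` moves across the bar, because
concatenation is associative. The tail rules clean the final store of `Im(ρT)`; since
`x ∉ dom ρT`, the image of `ρT·(x,l)` is `Im(ρT) ∪ {l}`, so cleaning with it removes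
exactly `l` in addition. -/

theorem envCat_assoc (ρ₁ ρ₂ ρ₃ : Env) :
    envCat ρ₁ (envCat ρ₂ ρ₃) = envCat (envCat ρ₁ ρ₂) ρ₃ := by
  funext y
  simp only [envCat]
  cases ρ₁ y <;> rfl

theorem envIm_envCat_single {ρ : Env} {x : Var} (hx : ρ x = none) (l : Loc) :
    envIm (envCat ρ (single x l)) = insert l (envIm ρ) := by
  ext l'
  simp only [envIm, envCat, single, updFn, emptyEnv, Set.mem_ofPred_eq, Set.mem_insert_iff]
  constructor
  · rintro ⟨y, hy⟩
    cases hρy : ρ y with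
    | some k => exact Or.inr ⟨y, by simpa [hρy] using hy⟩
    | none => by_cases hyx : y = x <;> simp_all [eq_comm]
  · rintro (rfl | ⟨y, hy⟩)
    · exact ⟨x, by simp [hx]⟩
    · exact ⟨y, by simp [hy]⟩

theorem clean_of_envIm_eq_insert {ρ ρ' : Env} {l : Loc} (h : envIm ρ' = insert l (envIm ρ))
    (s : Store) :
    clean ρ' s = resStore (clean ρ s) (storeDom (clean ρ s) \ {l}) := by
  funext l'
  by_cases hl : l' = l
  · subst hl
    simp [clean, resStore, h]
  · by_cases hρ : l' ∈ envIm ρ <;> simp [clean, resStore, storeDom, h, hl, hρ]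

theorem clean_envCat_single {ρ : Env} {x : Var} (hx : ρ x = none) (l : Loc) (s : Store) :
    clean (envCat ρ (single x l)) s = resStore (clean ρ s) (storeDom (clean ρ s) \ {l}) :=
  clean_of_envIm_eq_insert (envIm_envCat_single hx l) s

/-- switching a binding to the tail environment restricts
the final store, preserving the derivation height. -/
theorem switch_to_tail_environment
    {n : Nat} {ρT ρ : Env} {F : FEnv} {M : Tm} {s s' : Store} {v : Val}
    {x : Var} {l : Loc}
    (h : EvalO n ρT (envCat (single x l) ρ) F M s v s')
    (hx : x ∉ envDom ρT) :
    EvalO n (envCat ρT (single x l)) ρ F M s v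
      (resStore s' (storeDom s' \ {l})) := by
  have hclean := clean_envCat_single (not_not.mp hx) l
  induction n using Nat.strong_induction_on generalizing F M s s' v with
  | _ n IH =>
  cases h with
  | val => rw [← hclean]; exact .val
  | var hlook hw => rw [← hclean]; exact .var (by rwa [← envCat_assoc]) hw
  | assign ha hlook hl =>
    rw [← hclean]
    exact .assign (by rwa [← envCat_assoc]) (by rwa [← envCat_assoc]) hl
  | seq ha hb => exact .seq (by rwa [← envCat_assoc]) (IH _ (by omega) hb)
  | ifT hc hb => exact .ifT (by rwa [← envCat_assoc]) (IH _ (by omega) hb)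
  | ifF hc he => exact .ifF (by rwa [← envCat_assoc]) (IH _ (by omega) he)
  | letrec hb => exact .letrec (by rw [← envCat_assoc]; exact IH _ (by omega) hb)
  | call hf hargs hlen hvs hnd hfresh hbody =>
    rw [← hclean]
    exact .call hf (by rwa [← envCat_assoc]) hlen hvs hnd hfresh hbody

end CPC
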